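/- Let f_k(d) = a + g(d)·c_k with a ≠ 0 and g independent of k. Define for each k: L_k = (∑_i d_i)/(∑_i d_i f_k(d_i)) and R_k = (∑_i d_i² f_k(d_i))/(∑_i d_i f_k(d_i)). Then there exist constants γ₀, γ₁ (not depending on k, i.e. not depending on c_k) such that L_k = γ₀ + γ₁·R_k for all k with ∑_i d_i f_k(d_i) ≠ 0, provided the denominator D = a[(∑ d_i)(∑ d_i² g(d_i)) − (∑ d_i²)(∑ d_i g(d_i))] is nonzero. -/

import Mathlib

/-- with `f_k(d) = a + g(d) c_k`, the quantities
`L_k = ∑ d_i / ∑ d_i f_k(d_i)` and `R_k = ∑ d_i² f_k(d_i) / ∑ d_i f_k(d_i)`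
satisfy `L_k = γ₀ + γ₁ R_k` for constants `γ₀, γ₁` independent of `k`,
provided `D = a[(∑ d_i)(∑ d_i² g(d_i)) - (∑ d_i²)(∑ d_i g(d_i))] ≠ 0`. -/
theorem stmt5 {ι : Type*} (n : ℕ) (d : Fin n → ℝ) (hd : ∀ i, 0 < d i)
    (g : ℝ → ℝ) (a : ℝ) (ha : a ≠ 0) (c : ι → ℝ) (f : ι → ℝ → ℝ)
    (hf : ∀ k x, f k x = a + g x * c k)
    (hD : a * ((∑ i, d i) * (∑ i, d i ^ 2 * g (d i)) -
      (∑ i, d i ^ 2) * (∑ i, d i * g (d i))) ≠ 0) :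
    ∃ γ₀ γ₁ : ℝ, ∀ k, (∑ i, d i * f k (d i)) ≠ 0 →
      (∑ i, d i) / (∑ i, d i * f k (d i)) =
        γ₀ + γ₁ * ((∑ i, d i ^ 2 * f k (d i)) / (∑ i, d i * f k (d i))) := by
  set S1 := ∑ i, d i with hS1
  set S2 := ∑ i, d i ^ 2 with hS2
  set G1 := ∑ i, d i * g (d i) with hG1
  set G2 := ∑ i, d i ^ 2 * g (d i) with hG2
  set D := a * (S1 * G2 - S2 * G1) with hDdef
  refine ⟨S1 * G2 / D, -(S1 * G1) / D, fun k hk => ?_⟩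
  have h1 : (∑ i, d i * f k (d i)) = a * S1 + c k * G1 := by
    simp only [hf, hS1, hG1, Finset.mul_sum, mul_add]
    rw [← Finset.sum_add_distrib]
    congr 1; ext i; ring
  have h2 : (∑ i, d i ^ 2 * f k (d i)) = a * S2 + c k * G2 := by
    simp only [hf, hS2, hG2, Finset.mul_sum, mul_add]
    rw [← Finset.sum_add_distrib]
    congr 1; ext i; ring
  rw [h1] at hk
  rw [h1, h2]
  have hk' : S1 * a + c k * G1 ≠ 0 := by rwa [mul_comm S1 a]
  rw [hDdef] at hD ⊢
  have hE : S1 * G2 - G1 * S2 ≠ 0 := by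
    rw [mul_comm G1 S2]; exact right_ne_zero_of_mul hD
  field_simp [hk, hk', hD, hE]
  ring
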